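/- Residual sparsity of randomized greedy MIS (Lemma 1 of the paper): let G = (V,E) be a simple graph on n ≥ 1 vertices, let v_1,…,v_n be a uniformly random ordering of V, let 1 ≤ t < t' ≤ n, and let ε > 0. With probability at least 1 − ε, every vertex of the induced subgraph G[V_{t'} \ N(M_t)] has degree at most (t'/t)·ln(n/ε) within that induced subgraph. -/

import Mathlib

/-- The greedy (lexicographically first) independent set of a finite simple graph `G`
with respect to a linear order `σ` on its vertices: a vertex `v` is added iff no
neighbor of `v` preceding `v` in `σ` has already been added. -/
noncomputable def greedy {V : Type*} [Finite V] (σ : LinearOrder V) (G : SimpleGraph V) :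
    Set V :=
  letI := σ
  fun v => WellFounded.fix (Finite.wellFounded_of_trans_of_irrefl ((· < ·) : V → V → Prop))
    (fun v ih => ∀ u, (h : u < v) → G.Adj u v → ¬ ih u h) v

/-- The restriction of a linear order `σ` on `V` to a subset `U ⊆ V`. -/
noncomputable def restrictOrder {V : Type*} (σ : LinearOrder V) (U : Set V) :
    LinearOrder ↥U :=
  letI := σ
  inferInstance

/-- The closed neighborhood `N(S)` of a vertex set `S`: the union of `S` with the set of
all vertices adjacent in `G` to some vertex of `S`. -/
def closedN {V : Type*} (G : SimpleGraph V) (S : Set V) : Set V :=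
  S ∪ {v | ∃ s ∈ S, G.Adj s v}

/-- The linear order on `V` induced by a random ordering `ω : Fin n ≃ V`
(`v` comes before `w` iff the index of `v` is smaller). -/
noncomputable def rankOrder {n : ℕ} {V : Type*} (ω : Fin n ≃ V) : LinearOrder V :=
  LinearOrder.lift' (fun v => ω.symm v) ω.symm.injective

/-- `V_t`: the set of the first `t` vertices `v_1, …, v_t` of the random ordering `ω`. -/
def prefixSet {n : ℕ} {V : Type*} (ω : Fin n ≃ V) (t : ℕ) : Set V :=
  {v | (ω.symm v : ℕ) < t}

/-- `M_t = Greedy(G[V_t], σ_t)`: the greedy (lexicographically first) MIS of the subgraph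
induced by the first `t` vertices, with respect to the ordering induced by the indices. -/
noncomputable def prefixMIS {V : Type*} [Finite V] (G : SimpleGraph V) {n : ℕ}
    (ω : Fin n ≃ V) (t : ℕ) : Set V :=
  Subtype.val '' greedy (restrictOrder (rankOrder ω) (prefixSet ω t))
    (G.induce (prefixSet ω t))

/-- The residualSet set `V_{t'} \ N(M_t)`. -/
noncomputable def residualSet {V : Type*} [Finite V] (G : SimpleGraph V) {n : ℕ}
    (ω : Fin n ≃ V) (t t' : ℕ) : Set V :=
  prefixSet ω t' \ closedN G (prefixMIS G ω t)

section lemmas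
set_option linter.unusedSectionVars false
variable {V : Type*} [Fintype V] (G : SimpleGraph V) {n : ℕ}

lemma mem_greedy_iff {V : Type*} [Finite V] (σ : LinearOrder V) (G : SimpleGraph V) (v : V) :
    v ∈ greedy σ G ↔ ∀ u, σ.lt u v → G.Adj u v → u ∉ greedy σ G := by
  exact iff_of_eq (WellFounded.fix_eq
    (Finite.wellFounded_of_trans_of_irrefl (σ.lt))
    (fun v ih => ∀ u, (h : σ.lt u v) → G.Adj u v → ¬ ih u h) v)

lemma mem_prefixMIS_iff (ω : Fin n ≃ V) (i : ℕ) (x : V) :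
    x ∈ prefixMIS G ω i ↔ (ω.symm x : ℕ) < i ∧
      ∀ u, G.Adj u x → (ω.symm u : ℕ) < (ω.symm x : ℕ) → u ∉ prefixMIS G ω i := by
  have hlt : ∀ (a b : ↥(prefixSet ω i)),
      (restrictOrder (rankOrder ω) (prefixSet ω i)).lt a b ↔
        (ω.symm (a : V) : ℕ) < (ω.symm (b : V) : ℕ) := by
    intro a b
    exact Iff.rfl
  constructor
  · rintro ⟨x', hx', rfl⟩
    refine ⟨x'.2, fun u hadj hrk hu => ?_⟩
    rcases hu with ⟨u', hu', huv⟩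
    rw [mem_greedy_iff] at hx'
    refine hx' u' ?_ ?_ hu'
    · rw [hlt, huv]; exact hrk
    · show G.Adj (u' : V) (x' : V)
      rw [huv]; exact hadj
  · rintro ⟨hxi, hall⟩
    refine ⟨⟨x, hxi⟩, ?_, rfl⟩
    rw [mem_greedy_iff]
    intro u' hu' hadj hg
    exact hall u' hadj (by rwa [hlt] at hu') ⟨u', hg, rfl⟩

lemma prefixMIS_mono (ω : Fin n ≃ V) {i j : ℕ} (hij : i ≤ j) (x : V) :
    x ∈ prefixMIS G ω i ↔ x ∈ prefixMIS G ω j ∧ (ω.symm x : ℕ) < i := by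
  suffices h : ∀ N : ℕ, ∀ x : V, (ω.symm x : ℕ) < N →
      (x ∈ prefixMIS G ω i ↔ x ∈ prefixMIS G ω j ∧ (ω.symm x : ℕ) < i) by
    exact h ((ω.symm x : ℕ) + 1) x (Nat.lt_succ_self _)
  intro N
  induction N with
  | zero => intro x hx; omega
  | succ N IH =>
    intro x hx
    rw [mem_prefixMIS_iff, mem_prefixMIS_iff]
    constructor
    · rintro ⟨h1, h2⟩
      refine ⟨⟨lt_of_lt_of_le h1 hij, fun u hadj hrk => ?_⟩, h1⟩
      intro hu
      exact h2 u hadj hrk ((IH u (by omega)).2 ⟨hu, lt_trans hrk h1⟩)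
    · rintro ⟨⟨h1, h2⟩, h3⟩
      refine ⟨h3, fun u hadj hrk hu => ?_⟩
      exact h2 u hadj hrk ((IH u (by omega)).1 hu).1

lemma rank_eq_of_agree (ω σ : Fin n ≃ V) {i : ℕ}
    (h : ∀ k : Fin n, (k : ℕ) < i → ω k = σ k) {x : V} (hx : (ω.symm x : ℕ) < i) :
    σ.symm x = ω.symm x := by
  have := h (ω.symm x) hx
  rw [Equiv.apply_symm_apply] at this
  exact σ.symm_apply_eq.mpr this

lemma prefixMIS_agree (ω σ : Fin n ≃ V) {i : ℕ}
    (h : ∀ k : Fin n, (k : ℕ) < i → ω k = σ k) (x : V) :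
    x ∈ prefixMIS G ω i ↔ x ∈ prefixMIS G σ i := by
  have h' : ∀ k : Fin n, (k : ℕ) < i → σ k = ω k := fun k hk => (h k hk).symm
  suffices hs : ∀ N : ℕ, ∀ x : V, (ω.symm x : ℕ) < N →
      (x ∈ prefixMIS G ω i ↔ x ∈ prefixMIS G σ i) by
    exact hs ((ω.symm x : ℕ) + 1) x (Nat.lt_succ_self _)
  intro N
  induction N with
  | zero => intro x hx; omega
  | succ N IH =>
    intro x hx
    by_cases hxi : (ω.symm x : ℕ) < i
    · have hrkx : σ.symm x = ω.symm x := rank_eq_of_agree ω σ h hxi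
      rw [mem_prefixMIS_iff, mem_prefixMIS_iff, hrkx]
      constructor
      · rintro ⟨h1, h2⟩
        refine ⟨h1, fun u hadj hrk => ?_⟩
        have hui : (ω.symm u : ℕ) < i := by
          have : σ.symm u = ω.symm u := by
            have huσ : (σ.symm u : ℕ) < i := by omega
            exact (rank_eq_of_agree σ ω h' huσ).symm
          omega
        rw [← IH u (by
          have : σ.symm u = ω.symm u := (rank_eq_of_agree σ ω h' (by omega)).symm
          omega)]
        exact h2 u hadj (by
          have : σ.symm u = ω.symm u := (rank_eq_of_agree σ ω h' (by omega)).symm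
          omega)
      · rintro ⟨h1, h2⟩
        refine ⟨h1, fun u hadj hrk => ?_⟩
        have hrku : σ.symm u = ω.symm u := rank_eq_of_agree ω σ h (by omega)
        rw [IH u (by omega)]
        exact h2 u hadj (by omega)
    · constructor
      · intro hm; exact absurd ((mem_prefixMIS_iff G ω i x).1 hm).1 hxi
      · intro hm
        have h1 := ((mem_prefixMIS_iff G σ i x).1 hm).1
        have : ω.symm x = σ.symm x := rank_eq_of_agree σ ω h' h1
        omega

lemma prefix_subset_closedN (ω : Fin n ≃ V) (i : ℕ) :
    prefixSet ω i ⊆ closedN G (prefixMIS G ω i) := by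
  intro x hx
  by_cases hm : x ∈ prefixMIS G ω i
  · exact Or.inl hm
  · rw [mem_prefixMIS_iff] at hm
    push_neg at hm
    obtain ⟨u, hadj, hrk, hu⟩ := hm hx
    exact Or.inr ⟨u, hu, hadj⟩
end lemmas

section counting
variable {V : Type*} [Fintype V] [DecidableEq V] (G : SimpleGraph V) {n : ℕ}

set_option linter.unusedSectionVars false

/-- Eligible neighbours of `v` at step `i`. -/
noncomputable def Efin (ω : Fin n ≃ V) (t' : ℕ) (v : V) (i : ℕ) : Finset V :=
  @Finset.filter _
    (fun u => (ω.symm u : ℕ) < t' ∧ G.Adj v u ∧ u ∉ closedN G (prefixMIS G ω i))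
    (Classical.decPred _) Finset.univ

lemma mem_Efin {ω : Fin n ≃ V} {t' : ℕ} {v : V} {i : ℕ} {u : V} :
    u ∈ Efin G ω t' v i ↔
      (ω.symm u : ℕ) < t' ∧ G.Adj v u ∧ u ∉ closedN G (prefixMIS G ω i) := by
  rw [Efin, @Finset.mem_filter _ _ (Classical.decPred _)]
  simp

def StepBad (ω : Fin n ≃ V) (t' K : ℕ) (v : V) (i : ℕ) : Prop :=
  K ≤ (Efin G ω t' v i).card ∧ ∀ (hi : i < n), ω ⟨i, hi⟩ ∉ Efin G ω t' v i

noncomputable def BSet (t' K : ℕ) (v : V) (i : ℕ) : Finset (Fin n ≃ V) :=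
  @Finset.filter _ (fun ω => ∀ j < i, StepBad G ω t' K v j)
    (Classical.decPred _) Finset.univ

lemma mem_BSet {t' K : ℕ} {v : V} {i : ℕ} {ω : Fin n ≃ V} :
    ω ∈ BSet G t' K v i ↔ ∀ j < i, StepBad G ω t' K v j := by
  rw [BSet, @Finset.mem_filter _ _ (Classical.decPred _)]
  simp

/-- number of positions in `[i, t')`. -/
lemma Qcard {i t' : ℕ} (ht' : t' ≤ n) :
    ((Finset.univ : Finset (Fin n)).filter fun j : Fin n => i ≤ (j : ℕ) ∧ (j : ℕ) < t').card
      = t' - i := by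
  rw [← Nat.card_Ico i t']
  refine Finset.card_nbij (fun j => (j : ℕ)) ?_ ?_ ?_
  · intro j hj
    simp only [Finset.mem_coe, Finset.mem_filter, Finset.mem_univ, true_and] at hj
    exact Finset.mem_Ico.2 ⟨hj.1, hj.2⟩
  · intro a ha b hb hab
    exact Fin.val_injective hab
  · intro m hm
    rw [Finset.mem_coe, Finset.mem_Ico] at hm
    refine ⟨⟨m, lt_of_lt_of_le hm.2 ht'⟩, ?_, rfl⟩
    simp only [Finset.coe_filter, Finset.mem_univ, true_and, Set.mem_setOf_eq]
    exact hm

lemma Efin_card_le {ω : Fin n ≃ V} {t' : ℕ} {v : V} {i : ℕ} (ht' : t' ≤ n) :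
    (Efin G ω t' v i).card ≤ t' := by
  have h := Qcard (n := n) (i := 0) ht'
  calc (Efin G ω t' v i).card
      ≤ ((Finset.univ : Finset (Fin n)).filter
          fun j : Fin n => 0 ≤ (j : ℕ) ∧ (j : ℕ) < t').card := by
        refine Finset.card_le_card_of_injOn (fun u => ω.symm u) ?_ ?_
        · intro u hu
          simp only [Finset.mem_coe, Finset.mem_filter, Finset.mem_univ, true_and]
          exact ⟨Nat.zero_le _, ((mem_Efin G).1 hu).1⟩
        · intro a _ b _ hab
          exact ω.symm.injective hab
    _ = t' := by rw [h]; omega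
end counting

section swapinv
variable {V : Type*} [Fintype V] [DecidableEq V] (G : SimpleGraph V) {n : ℕ}
set_option linter.unusedSectionVars false

lemma swap_symm_apply (ω : Fin n ≃ V) (a p : Fin n) (u : V) :
    ((Equiv.swap a p).trans ω).symm u = Equiv.swap a p (ω.symm u) := by
  simp [Equiv.symm_trans_apply, Equiv.symm_swap]

lemma swap_agree (ω : Fin n ≃ V) {a p : Fin n} {i : ℕ} (ha : i ≤ (a : ℕ)) (hp : i ≤ (p : ℕ))
    {j : ℕ} (hj : j ≤ i) : ∀ k : Fin n, (k : ℕ) < j → ((Equiv.swap a p).trans ω) k = ω k := by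
  intro k hk
  have hka : k ≠ a := by intro h; subst h; omega
  have hkp : k ≠ p := by intro h; subst h; omega
  simp [Equiv.trans_apply, Equiv.swap_apply_of_ne_of_ne hka hkp]

lemma swap_rank_lt_iff (ω : Fin n ≃ V) {a p : Fin n} {t' : ℕ}
    (ha : (a : ℕ) < t') (hp : (p : ℕ) < t') (u : V) :
    ((((Equiv.swap a p).trans ω).symm u : Fin n) : ℕ) < t' ↔ ((ω.symm u : Fin n) : ℕ) < t' := by
  rw [swap_symm_apply]
  rcases eq_or_ne (ω.symm u) a with h | h
  · rw [h, Equiv.swap_apply_left]; omega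
  · rcases eq_or_ne (ω.symm u) p with h2 | h2
    · rw [h2, Equiv.swap_apply_right]; omega
    · rw [Equiv.swap_apply_of_ne_of_ne h h2]

lemma swap_Efin_eq (ω : Fin n ≃ V) {a p : Fin n} {i t' : ℕ} (v : V)
    (ha : i ≤ (a : ℕ)) (hp : i ≤ (p : ℕ)) (ha' : (a : ℕ) < t') (hp' : (p : ℕ) < t')
    {j : ℕ} (hj : j ≤ i) :
    Efin G ((Equiv.swap a p).trans ω) t' v j = Efin G ω t' v j := by
  have hMIS : prefixMIS G ((Equiv.swap a p).trans ω) j = prefixMIS G ω j :=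
    Set.ext fun x => prefixMIS_agree G _ ω (swap_agree ω ha hp hj) x
  ext u
  rw [mem_Efin, mem_Efin, hMIS, swap_rank_lt_iff ω ha' hp']

lemma swap_StepBad_iff (ω : Fin n ≃ V) {a p : Fin n} {i t' K : ℕ} (v : V)
    (ha : i ≤ (a : ℕ)) (hp : i ≤ (p : ℕ)) (ha' : (a : ℕ) < t') (hp' : (p : ℕ) < t')
    {j : ℕ} (hj : j < i) :
    StepBad G ((Equiv.swap a p).trans ω) t' K v j ↔ StepBad G ω t' K v j := by
  have hE := swap_Efin_eq G ω v ha hp ha' hp' (j := j) (le_of_lt hj)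
  unfold StepBad
  rw [hE]
  have hval : ∀ (hjn : j < n), ((Equiv.swap a p).trans ω) ⟨j, hjn⟩ = ω ⟨j, hjn⟩ := by
    intro hjn
    exact swap_agree ω ha hp (show j+1 ≤ i from hj) ⟨j, hjn⟩ (Nat.lt_succ_self j)
  constructor
  · rintro ⟨h1, h2⟩
    exact ⟨h1, fun hjn => by rw [← hval hjn]; exact h2 hjn⟩
  · rintro ⟨h1, h2⟩
    exact ⟨h1, fun hjn => by rw [hval hjn]; exact h2 hjn⟩
end swapinv

section mainstep
variable {V : Type*} [Fintype V] [DecidableEq V] (G : SimpleGraph V) {n : ℕ}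
set_option linter.unusedSectionVars false
set_option maxHeartbeats 1000000

lemma step_ineq (t' K : ℕ) (v : V) {i : ℕ} (hit' : i < t') (ht'n : t' ≤ n) :
    (BSet (n := n) G t' K v (i+1)).card * (t' - i) ≤
      (BSet (n := n) G t' K v i).card * (t' - i - K) := by
  classical
  have hin : i < n := lt_of_lt_of_le hit' ht'n
  set a : Fin n := ⟨i, hin⟩ with ha_def
  have hav : (a : ℕ) = i := rfl
  set Q : Finset (Fin n) := Finset.univ.filter (fun p : Fin n => i ≤ (p : ℕ) ∧ (p : ℕ) < t')
    with hQ_def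
  have hQcard : Q.card = t' - i := Qcard ht'n
  set Bstar : Finset (Fin n ≃ V) :=
    (BSet (n := n) G t' K v i).filter (fun σ => K ≤ (Efin G σ t' v i).card) with hBstar_def
  set P1 : Finset ((Fin n ≃ V) × Fin n) := (BSet G t' K v (i+1)) ×ˢ Q with hP1_def
  set P2 : Finset ((Fin n ≃ V) × Fin n) :=
    (Bstar ×ˢ Q).filter (fun x => x.1 x.2 ∉ Efin G x.1 t' v i) with hP2_def
  have hP1card : P1.card = (BSet (n := n) G t' K v (i+1)).card * (t' - i) := by
    rw [hP1_def, Finset.card_product, hQcard]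
  -- the involution
  set F : ((Fin n ≃ V) × Fin n) → ((Fin n ≃ V) × Fin n) :=
    fun x => ((Equiv.swap a x.2).trans x.1, x.2) with hF_def
  have hFinv : ∀ x, F (F x) = x := by
    intro ⟨ω, p⟩
    simp only [hF_def]
    rw [← Equiv.trans_assoc]
    simp
  have hmaps : ∀ x ∈ P1, F x ∈ P2 := by
    rintro ⟨ω, p⟩ hx
    rw [hP1_def, Finset.mem_product] at hx
    obtain ⟨hB, hQ⟩ := hx
    rw [hQ_def, Finset.mem_filter] at hQ
    obtain ⟨-, hip, hpt'⟩ := hQ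
    rw [mem_BSet] at hB
    have hSi : StepBad G ω t' K v i := hB i (Nat.lt_succ_self i)
    have haa : i ≤ (a : ℕ) := le_of_eq hav.symm
    have hat' : (a : ℕ) < t' := by omega
    have hEeq : Efin G ((Equiv.swap a p).trans ω) t' v i = Efin G ω t' v i :=
      swap_Efin_eq G ω v haa hip hat' hpt' (le_refl i)
    rw [hP2_def, Finset.mem_filter, Finset.mem_product]
    refine ⟨⟨?_, ?_⟩, ?_⟩
    · -- σ ∈ Bstar
      rw [hBstar_def, Finset.mem_filter]
      constructor
      · rw [mem_BSet]
        intro j hj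
        rw [swap_StepBad_iff G ω v haa hip hat' hpt' hj]
        exact hB j (by omega)
      · rw [hEeq]
        exact hSi.1
    · rw [hQ_def, Finset.mem_filter]
      exact ⟨Finset.mem_univ _, hip, hpt'⟩
    · -- σ p ∉ Efin σ i
      show ((Equiv.swap a p).trans ω) p ∉ Efin G ((Equiv.swap a p).trans ω) t' v i
      rw [hEeq]
      have : ((Equiv.swap a p).trans ω) p = ω a := by
        simp [Equiv.trans_apply, Equiv.swap_apply_right]
      rw [this]
      exact hSi.2 hin
  have hinjF : Set.InjOn F ↑P1 := by
    intro x _ y _ hxy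
    have := congrArg F hxy
    rwa [hFinv, hFinv] at this
  have hP1P2 : P1.card ≤ P2.card := Finset.card_le_card_of_injOn F hmaps hinjF
  -- bound P2 fiberwise
  have hfib : ∀ x ∈ P2, x.1 ∈ Bstar := by
    rintro ⟨σ, p⟩ hx
    rw [hP2_def, Finset.mem_filter, Finset.mem_product] at hx
    exact hx.1.1
  have hP2card : P2.card ≤ Bstar.card * (t' - i - K) := by
    rw [Finset.card_eq_sum_card_fiberwise hfib]
    have hbound : ∀ σ ∈ Bstar, (P2.filter (fun x => x.1 = σ)).card ≤ t' - i - K := by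
      intro σ hσ
      rw [hBstar_def, Finset.mem_filter] at hσ
      obtain ⟨hσB, hσK⟩ := hσ
      set Qbad : Finset (Fin n) := Q.filter (fun p => σ p ∉ Efin G σ t' v i) with hQbad_def
      have step1 : (P2.filter (fun x => x.1 = σ)).card ≤ Qbad.card := by
        refine Finset.card_le_card_of_injOn (fun x => x.2) ?_ ?_
        · rintro ⟨τ, p⟩ hx
          rw [Finset.mem_coe, Finset.mem_filter] at hx
          obtain ⟨hxP2, hτσ⟩ := hx
          rw [hP2_def, Finset.mem_filter, Finset.mem_product] at hxP2
          subst hτσ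
          rw [hQbad_def, Finset.mem_coe, Finset.mem_filter]
          exact ⟨hxP2.1.2, hxP2.2⟩
        · rintro ⟨τ, p⟩ hx ⟨τ', p'⟩ hy hpp'
          rw [Finset.mem_coe, Finset.mem_filter] at hx hy
          simp only at hpp'
          rw [Prod.ext_iff]
          exact ⟨hx.2.trans hy.2.symm, hpp'⟩
      have step2 : Qbad.card = (t' - i) - (Efin G σ t' v i).card := by
        have hgood : (Q.filter (fun p => σ p ∈ Efin G σ t' v i)).card
            = (Efin G σ t' v i).card := by
          refine Finset.card_nbij (fun p => σ p) ?_ ?_ ?_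
          · intro p hp
            rw [Finset.mem_coe, Finset.mem_filter] at hp
            exact hp.2
          · intro x _ y _ hxy
            exact σ.injective hxy
          · intro u hu
            rw [Finset.mem_coe] at hu
            refine ⟨σ.symm u, ?_, by simp⟩
            rw [Finset.mem_coe, Finset.mem_filter, hQ_def, Finset.mem_filter]
            have hrk : (σ.symm u : ℕ) < t' := ((mem_Efin G).1 hu).1
            have hge : i ≤ (σ.symm u : ℕ) := by
              by_contra hlt
              push_neg at hlt
              have hcl : u ∈ closedN G (prefixMIS G σ i) :=
                prefix_subset_closedN G σ i hlt
              exact ((mem_Efin G).1 hu).2.2 hcl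
            refine ⟨⟨Finset.mem_univ _, hge, hrk⟩, by simpa using hu⟩
        have hQbadcard : Qbad.card
            = Q.card - (Q.filter (fun p => σ p ∈ Efin G σ t' v i)).card := by
          rw [hQbad_def, Finset.filter_not, Finset.card_sdiff_of_subset (Finset.filter_subset _ _)]
        rw [hQbadcard, hgood, hQcard]
      calc (P2.filter (fun x => x.1 = σ)).card ≤ Qbad.card := step1
        _ = (t' - i) - (Efin G σ t' v i).card := step2
        _ ≤ t' - i - K := Nat.sub_le_sub_left hσK _
    calc ∑ σ ∈ Bstar, (P2.filter (fun x => x.1 = σ)).card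
        ≤ ∑ σ ∈ Bstar, (t' - i - K) := Finset.sum_le_sum hbound
      _ = Bstar.card * (t' - i - K) := by rw [Finset.sum_const, smul_eq_mul]
  have hBstar_le : Bstar.card ≤ (BSet (n := n) G t' K v i).card :=
    Finset.card_le_card (Finset.filter_subset _ _)
  calc (BSet (n := n) G t' K v (i+1)).card * (t' - i) = P1.card := hP1card.symm
    _ ≤ P2.card := hP1P2
    _ ≤ Bstar.card * (t' - i - K) := hP2card
    _ ≤ (BSet (n := n) G t' K v i).card * (t' - i - K) := Nat.mul_le_mul_right _ hBstar_le
end mainstep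

section chain
variable {V : Type*} [Fintype V] [DecidableEq V] (G : SimpleGraph V) {n : ℕ}
set_option linter.unusedSectionVars false

lemma step_ineq' (t' K : ℕ) (v : V) {i : ℕ} (hit' : i < t') (ht'n : t' ≤ n) :
    t' * (BSet (n := n) G t' K v (i+1)).card ≤ (t' - K) * (BSet (n := n) G t' K v i).card := by
  have h := step_ineq G t' K v hit' ht'n
  have key : t' * (t' - i - K) ≤ (t' - i) * (t' - K) := by
    rcases le_or_gt (t' - i) K with hc | hc
    · have : t' - i - K = 0 := by omega
      rw [this, Nat.mul_zero]
      exact Nat.zero_le _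
    · have h1 : K + i ≤ t' := by omega
      have h2 : K ≤ t' := by omega
      have h3 : i ≤ t' := by omega
      zify [h1, h2, h3, show K ≤ t' - i by omega]
      nlinarith [Int.ofNat_nonneg i, Int.ofNat_nonneg K]
  have hpos : 0 < t' - i := by omega
  refine Nat.le_of_mul_le_mul_left ?_ hpos
  calc (t' - i) * (t' * (BSet (n := n) G t' K v (i+1)).card)
      = t' * ((BSet (n := n) G t' K v (i+1)).card * (t' - i)) := by ring
    _ ≤ t' * ((BSet (n := n) G t' K v i).card * (t' - i - K)) :=
        Nat.mul_le_mul_left _ h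
    _ = (t' * (t' - i - K)) * (BSet (n := n) G t' K v i).card := by ring
    _ ≤ ((t' - i) * (t' - K)) * (BSet (n := n) G t' K v i).card :=
        Nat.mul_le_mul_right _ key
    _ = (t' - i) * ((t' - K) * (BSet (n := n) G t' K v i).card) := by ring

lemma chain_ineq (t' K : ℕ) (v : V) (ht'n : t' ≤ n) :
    ∀ m : ℕ, m ≤ t' →
      t' ^ m * (BSet (n := n) G t' K v m).card ≤ (t' - K) ^ m * Fintype.card (Fin n ≃ V) := by
  intro m
  induction m with
  | zero =>
    intro _
    simpa using Finset.card_le_univ _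
  | succ m IH =>
    intro hm
    have hmt' : m < t' := hm
    calc t' ^ (m+1) * (BSet (n := n) G t' K v (m+1)).card
        = t' ^ m * (t' * (BSet (n := n) G t' K v (m+1)).card) := by ring
      _ ≤ t' ^ m * ((t' - K) * (BSet (n := n) G t' K v m).card) :=
          Nat.mul_le_mul_left _ (step_ineq' G t' K v hmt' ht'n)
      _ = (t' - K) * (t' ^ m * (BSet (n := n) G t' K v m).card) := by ring
      _ ≤ (t' - K) * ((t' - K) ^ m * Fintype.card (Fin n ≃ V)) :=
          Nat.mul_le_mul_left _ (IH (le_of_lt hmt'))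
      _ = (t' - K) ^ (m+1) * Fintype.card (Fin n ≃ V) := by ring

lemma bad_mem_BSet (t t' K : ℕ) (htt' : t ≤ t') (v : V) (ω : Fin n ≃ V)
    (hres : v ∈ residualSet G ω t t')
    (hK : K ≤ {u | u ∈ residualSet G ω t t' ∧ G.Adj v u}.ncard) :
    ω ∈ BSet (n := n) G t' K v t := by
  rw [mem_BSet]
  intro j hj
  constructor
  · -- K ≤ card of eligible set
    have hsub : {u | u ∈ residualSet G ω t t' ∧ G.Adj v u} ⊆ ↑(Efin G ω t' v j) := by
      rintro u ⟨⟨hu1, hu2⟩, hadj⟩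
      rw [Finset.mem_coe, mem_Efin]
      refine ⟨hu1, hadj, fun hcl => hu2 ?_⟩
      rcases hcl with hm | ⟨s, hs, hadjsu⟩
      · exact Or.inl ((prefixMIS_mono G ω (le_of_lt hj) u).1 hm).1
      · have hsM : s ∈ prefixMIS G ω t :=
          ((prefixMIS_mono G ω (le_of_lt hj) s).1 hs).1
        exact Or.inr ⟨s, hsM, hadjsu⟩
    calc K ≤ {u | u ∈ residualSet G ω t t' ∧ G.Adj v u}.ncard := hK
      _ ≤ (↑(Efin G ω t' v j) : Set V).ncard := Set.ncard_le_ncard hsub (Set.toFinite _)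
      _ = (Efin G ω t' v j).card := Set.ncard_coe_finset _
  · -- the vertex at position j is not eligible
    intro hjn hmem
    rw [mem_Efin] at hmem
    obtain ⟨hrk, hadj, hncl⟩ := hmem
    set u := ω ⟨j, hjn⟩ with hu_def
    have hrku : (ω.symm u : ℕ) = j := by rw [hu_def, Equiv.symm_apply_apply]
    have huM : u ∈ prefixMIS G ω (j+1) := by
      rw [mem_prefixMIS_iff]
      refine ⟨by omega, fun w hadjw hrkw hwM => ?_⟩
      have hwMj : w ∈ prefixMIS G ω j :=
        (prefixMIS_mono G ω (Nat.le_succ j) w).2 ⟨hwM, by omega⟩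
      exact hncl (Or.inr ⟨w, hwMj, hadjw⟩)
    have huMt : u ∈ prefixMIS G ω t :=
      ((prefixMIS_mono G ω (by omega : j + 1 ≤ t) u).1 huM).1
    exact hres.2 (Or.inr ⟨u, huMt, hadj.symm⟩)
end chain

section finalbound
variable {V : Type*} [Fintype V] [DecidableEq V] (G : SimpleGraph V) {n : ℕ}
set_option linter.unusedSectionVars false

lemma Bt_card_real_le (t t' : ℕ) (ε : ℝ) (v : V)
    (hn1 : 1 ≤ n) (ht : 1 ≤ t) (htt' : t < t') (ht'n : t' ≤ n)
    (hε : 0 < ε) (hε1 : ε < 1) :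
    ((BSet (n := n) G t' (⌊((t' : ℝ) / t) * Real.log ((n : ℝ) / ε)⌋₊ + 1) v t).card : ℝ)
      ≤ (ε / n) * Fintype.card (Fin n ≃ V) := by
  set L : ℝ := Real.log ((n : ℝ) / ε) with hL_def
  set b : ℝ := ((t' : ℝ) / t) * L with hb_def
  set K : ℕ := ⌊b⌋₊ + 1 with hK_def
  have ht0 : (0 : ℝ) < t := by exact_mod_cast ht
  have ht'0 : (0 : ℝ) < t' := by exact_mod_cast (by omega : 0 < t')
  have hn0 : (0 : ℝ) < n := by exact_mod_cast hn1
  have hbK : b < (K : ℝ) := by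
    rw [hK_def]
    push_cast
    exact Nat.lt_floor_add_one b
  clear_value K
  have hN0 : (0 : ℝ) ≤ (Fintype.card (Fin n ≃ V) : ℝ) := Nat.cast_nonneg _
  by_cases hKt' : K ≤ t'
  · have hchain := chain_ineq G t' K v ht'n t (le_of_lt htt')
    have hcast : ((BSet (n := n) G t' K v t).card : ℝ) * (t' : ℝ) ^ t
        ≤ ((t' : ℝ) - K) ^ t * (Fintype.card (Fin n ≃ V) : ℝ) := by
      have := (Nat.cast_le (α := ℝ)).2 hchain
      push_cast [Nat.cast_sub hKt'] at this
      linarith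
    have ht'pow : (0 : ℝ) < (t' : ℝ) ^ t := by positivity
    have h1 : ((BSet (n := n) G t' K v t).card : ℝ)
        ≤ (((t' : ℝ) - K) / t') ^ t * (Fintype.card (Fin n ≃ V) : ℝ) := by
      rw [div_pow, div_mul_eq_mul_div, le_div_iff₀ ht'pow]
      linarith
    have hbase_eq : ((t' : ℝ) - K) / t' = 1 - (K : ℝ) / t' := by field_simp
    have hKR : (K : ℝ) ≤ t' := by exact_mod_cast hKt'
    have hbase0 : (0 : ℝ) ≤ ((t' : ℝ) - K) / t' := div_nonneg (by linarith) ht'0.le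
    have hbase : ((t' : ℝ) - K) / t' ≤ Real.exp (-((K : ℝ) / t')) := by
      have := Real.add_one_le_exp (-((K : ℝ) / t'))
      rw [hbase_eq]; linarith
    have hpow : (((t' : ℝ) - K) / t') ^ t ≤ Real.exp (-((K : ℝ) / t')) ^ t :=
      pow_le_pow_left₀ hbase0 hbase t
    have hexp_eq : Real.exp (-((K : ℝ) / t')) ^ t = Real.exp ((t : ℝ) * (-((K : ℝ) / t'))) := by
      rw [Real.exp_nat_mul]
    have hexp_le : Real.exp ((t : ℝ) * (-((K : ℝ) / t'))) ≤ ε / n := by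
      rw [← Real.le_log_iff_exp_le (by positivity : (0 : ℝ) < ε / n)]
      have hlog_eq : Real.log (ε / n) = -L := by
        rw [hL_def, ← Real.log_inv]
        congr 1
        field_simp
      rw [hlog_eq]
      have hbt : b * (t : ℝ) = (t' : ℝ) * L := by
        rw [hb_def]; field_simp
      have hKmul : b * (t : ℝ) ≤ (K : ℝ) * t :=
        mul_le_mul_of_nonneg_right hbK.le (le_of_lt ht0)
      have hLK : L * (t' : ℝ) ≤ (K : ℝ) * t := by linarith
      rw [mul_neg, neg_le_neg_iff, mul_div_assoc', le_div_iff₀ ht'0]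
      linarith
    have hfin : (((t' : ℝ) - K) / t') ^ t ≤ ε / n := by
      calc (((t' : ℝ) - K) / t') ^ t ≤ Real.exp (-((K : ℝ) / t')) ^ t := hpow
        _ = Real.exp ((t : ℝ) * (-((K : ℝ) / t'))) := hexp_eq
        _ ≤ ε / n := hexp_le
    calc ((BSet (n := n) G t' K v t).card : ℝ)
        ≤ (((t' : ℝ) - K) / t') ^ t * (Fintype.card (Fin n ≃ V) : ℝ) := h1
      _ ≤ (ε / n) * (Fintype.card (Fin n ≃ V) : ℝ) :=
          mul_le_mul_of_nonneg_right hfin hN0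
  · have hempty : BSet (n := n) G t' K v t = ∅ := by
      rw [Finset.eq_empty_iff_forall_notMem]
      intro ω hω
      have h0 := ((mem_BSet G).1 hω 0 (by omega)).1
      have := Efin_card_le G (ω := ω) (v := v) (i := 0) ht'n
      omega
    rw [hempty]
    simp only [Finset.card_empty, Nat.cast_zero]
    positivity
end finalbound

/-- Residual sparsity of randomized greedy MIS: for a uniformly random ordering
`v_1, …, v_n` of the vertices, with probability at least `1 - ε`, every vertex of
`G[V_{t'} \ N(M_t)]` has degree at most `(t'/t)·ln(n/ε)` within that induced subgraph. -/
theorem residual_sparsity {V : Type*} [Fintype V] (G : SimpleGraph V) (n t t' : ℕ) (ε : ℝ)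
    (hn : Fintype.card V = n) (hn1 : 1 ≤ n) (ht : 1 ≤ t) (htt' : t < t') (ht' : t' ≤ n)
    (hε : 0 < ε) :
    (1 - ε) * (Nat.card (Fin n ≃ V) : ℝ) ≤
      (Nat.card {ω : Fin n ≃ V // ∀ v ∈ residualSet G ω t t',
        (({u | u ∈ residualSet G ω t t' ∧ G.Adj v u}).ncard : ℝ) ≤
          ((t' : ℝ) / (t : ℝ)) * Real.log ((n : ℝ) / ε)} : ℝ) := by
  classical
  rcases le_or_gt 1 ε with hε1 | hε1
  · have h1 : (1 - ε) * (Nat.card (Fin n ≃ V) : ℝ) ≤ 0 :=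
      mul_nonpos_of_nonpos_of_nonneg (by linarith) (Nat.cast_nonneg _)
    exact h1.trans (Nat.cast_nonneg _)
  set bound : ℝ := ((t' : ℝ) / (t : ℝ)) * Real.log ((n : ℝ) / ε) with hbound_def
  set K : ℕ := ⌊bound⌋₊ + 1 with hK_def
  set good : (Fin n ≃ V) → Prop := fun ω => ∀ v ∈ residualSet G ω t t',
      (({u | u ∈ residualSet G ω t t' ∧ G.Adj v u}).ncard : ℝ) ≤ bound with hgood_def
  set N : ℕ := Fintype.card (Fin n ≃ V) with hN_def
  have hNat : Nat.card {ω : Fin n ≃ V // good ω}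
      = (Finset.univ.filter good).card := by
    rw [Nat.card_eq_fintype_card, Fintype.card_subtype]
  have hNcard : (Nat.card (Fin n ≃ V) : ℝ) = (N : ℝ) := by
    rw [Nat.card_eq_fintype_card, hN_def]
  set Good : Finset (Fin n ≃ V) := Finset.univ.filter good with hGood_def
  set Bad : Finset (Fin n ≃ V) := Finset.univ.filter (fun ω => ¬ good ω) with hBad_def
  have hsplit : Good.card + Bad.card = N := by
    rw [hGood_def, hBad_def, hN_def]
    rw [Finset.card_filter_add_card_filter_not, Finset.card_univ]
  have hbound0 : (0 : ℝ) ≤ bound := by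
    rw [hbound_def]
    have hnε : (1 : ℝ) ≤ (n : ℝ) / ε := by
      rw [le_div_iff₀ hε]
      have : (1 : ℝ) ≤ (n : ℝ) := by exact_mod_cast hn1
      nlinarith
    have := Real.log_nonneg hnε
    have ht0 : (0 : ℝ) < t := by exact_mod_cast ht
    positivity
  have hBadsub : Bad ⊆ Finset.univ.biUnion (fun v : V =>
      Finset.univ.filter (fun ω : Fin n ≃ V => v ∈ residualSet G ω t t' ∧
        bound < (({u | u ∈ residualSet G ω t t' ∧ G.Adj v u}).ncard : ℝ))) := by
    intro ω hω
    rw [hBad_def, Finset.mem_filter] at hω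
    have hng := hω.2
    simp only [hgood_def] at hng
    push_neg at hng
    obtain ⟨v, hv, hlt⟩ := hng
    rw [Finset.mem_biUnion]
    exact ⟨v, Finset.mem_univ _, Finset.mem_filter.2 ⟨Finset.mem_univ _, hv, hlt⟩⟩
  have hvsub : ∀ v : V, Finset.univ.filter (fun ω : Fin n ≃ V => v ∈ residualSet G ω t t' ∧
      bound < (({u | u ∈ residualSet G ω t t' ∧ G.Adj v u}).ncard : ℝ))
        ⊆ BSet (n := n) G t' K v t := by
    intro v ω hω
    rw [Finset.mem_filter] at hω
    obtain ⟨-, hres, hlt⟩ := hω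
    refine bad_mem_BSet G t t' K (le_of_lt htt') v ω hres ?_
    have hfl : ⌊bound⌋₊ < {u | u ∈ residualSet G ω t t' ∧ G.Adj v u}.ncard :=
      (Nat.floor_lt hbound0).2 hlt
    omega
  have hBad_le : (Bad.card : ℝ) ≤ ε * N := by
    have h1 : Bad.card ≤ ∑ v : V, (BSet (n := n) G t' K v t).card := by
      refine le_trans (Finset.card_le_card hBadsub) (le_trans Finset.card_biUnion_le ?_)
      exact Finset.sum_le_sum fun v _ => Finset.card_le_card (hvsub v)
    have h2 : ((∑ v : V, (BSet (n := n) G t' K v t).card : ℕ) : ℝ)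
        ≤ ∑ v : V, ((ε / n) * (N : ℝ)) := by
      push_cast
      refine Finset.sum_le_sum fun v _ => ?_
      have := Bt_card_real_le G t t' ε v hn1 ht htt' ht' hε hε1
      rw [hbound_def] at hK_def
      rw [← hK_def] at this
      exact this
    have h3 : ∑ v : V, ((ε / n) * (N : ℝ)) = ε * N := by
      rw [Finset.sum_const, Finset.card_univ, hn, nsmul_eq_mul]
      have hn0 : (n : ℝ) ≠ 0 := by positivity
      field_simp
    have h1' : (Bad.card : ℝ) ≤ ((∑ v : V, (BSet (n := n) G t' K v t).card : ℕ) : ℝ) := by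
      exact_mod_cast h1
    linarith
  have hGoodN : (Good.card : ℝ) + (Bad.card : ℝ) = (N : ℝ) := by
    exact_mod_cast congrArg (Nat.cast (R := ℝ)) hsplit
  rw [hNcard]
  show (1 - ε) * (N : ℝ) ≤ ((Nat.card {ω : Fin n ≃ V // good ω} : ℕ) : ℝ)
  rw [hNat]
  have : (1 - ε) * (N : ℝ) ≤ (N : ℝ) - ε * N := by ring_nf; rfl
  show (1 - ε) * (N : ℝ) ≤ ((Good.card : ℕ) : ℝ)
  linarith
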